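/- There exists a constant C > 0 such that for every integer d ≥ 1 there exists a real polynomial p of degree at most d with p(0) = 1 and ∫ p(x)² dγ(x) ≤ C/√d, where γ is the standard Gaussian measure N(0,1) on ℝ. -/

import Mathlib

/-!
Let `Heₖ` be the probabilists' Hermite polynomials. Gaussian integration by parts,
`∫ P' dγ = ∫ x P dγ`, makes `P ↦ X P - P'` adjoint to differentiation, so
`∫ P Heₙ dγ = ∫ P⁽ⁿ⁾ dγ`; hence the `Heₖ` are orthogonal in `L²(γ)` with `‖Heₖ‖² = k!`.
The truncated expansion `K_d = ∑_{k ≤ d} Heₖ(0) Heₖ / k!` of evaluation at `0` then satisfies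
`∫ K_d² dγ = K_d(0)`, and `p = K_d / K_d(0)` has `p(0) = 1` and `∫ p² dγ = 1 / K_d(0)`.

In `K_d(0) = ∑_{k ≤ d} Heₖ(0)² / k!` keep the even terms `w_m = He_{2m}(0)² / (2m)!`, equal to
`((2m-1)‼)² / (2m)!`. They decrease, with `w_{m+1} = w_m (2m+1) / (2m+2)`, and `(4m+1) w_m² ≥ 1` by
induction, so `K_d(0) ≥ (d/2 + 1) w_{d/2}` is of order `√d`.
-/

open MeasureTheory ProbabilityTheory Polynomial Real
open scoped Nat

lemma integrable_eval_gaussianReal (P : ℝ[X]) (μ : ℝ) (v : NNReal) :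
    Integrable (fun x => P.eval x) (gaussianReal μ v) := by
  induction P using Polynomial.induction_on' with
  | add p q hp hq => simp only [eval_add]; exact hp.add hq
  | monomial n a =>
    have h := (memLp_id_gaussianReal (μ := μ) (v := v) n).integrable_norm_pow'
    simp only [eval_monomial]
    exact (h.mono' (by fun_prop) (ae_of_all _ fun x => by simp)).const_mul a

lemma gaussianPDFReal_zero_one :
    gaussianPDFReal 0 1 = fun x => (√(2 * π))⁻¹ * rexp (-(x ^ 2 / 2)) := by
  ext x; simp [gaussianPDFReal_def, neg_div]

lemma hasDerivAt_gaussianPDFReal_zero_one (x : ℝ) :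
    HasDerivAt (gaussianPDFReal 0 1) (-x * gaussianPDFReal 0 1 x) x := by
  have h : HasDerivAt (fun y : ℝ => -(y ^ 2 / 2)) (-x) x := by
    simpa using ((hasDerivAt_pow 2 x).div_const 2).fun_neg
  rw [gaussianPDFReal_zero_one]
  exact (h.exp.const_mul _).congr_deriv (by ring)

lemma integrable_gaussianPDFReal_mul_eval (P : ℝ[X]) :
    Integrable (fun x => gaussianPDFReal 0 1 x * P.eval x) := by
  have h := integrable_eval_gaussianReal P 0 1
  rw [gaussianReal_of_var_ne_zero _ one_ne_zero,
    integrable_withDensity_iff_integrable_smul' (measurable_gaussianPDF _ _)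
      (ae_of_all _ fun _ => gaussianPDF_lt_top)] at h
  simpa using h

lemma integral_eval_derivative_gaussianReal (P : ℝ[X]) :
    ∫ x, (derivative P).eval x ∂(gaussianReal 0 1)
      = ∫ x, (X * P).eval x ∂(gaussianReal 0 1) := by
  have hparts := integral_mul_deriv_eq_deriv_mul_of_integrable (u := fun x => P.eval x)
    (v := gaussianPDFReal 0 1) (fun x _ => P.hasDerivAt x)
    (fun x _ => hasDerivAt_gaussianPDFReal_zero_one x)
    ((integrable_gaussianPDFReal_mul_eval (-(X * P))).congr (ae_of_all _ fun x => by simp; ring))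
    ((integrable_gaussianPDFReal_mul_eval (derivative P)).congr
      (ae_of_all _ fun x => by simp; ring))
    ((integrable_gaussianPDFReal_mul_eval P).congr (ae_of_all _ fun x => by simp; ring))
  simp only [integral_gaussianReal_eq_integral_smul one_ne_zero, smul_eq_mul, eval_mul, eval_X]
  calc ∫ x, gaussianPDFReal 0 1 x * (derivative P).eval x
      = -∫ x, P.eval x * (-x * gaussianPDFReal 0 1 x) := by
        rw [hparts, neg_neg]; congr 1; ext x; ring
    _ = ∫ x, gaussianPDFReal 0 1 x * (x * P.eval x) := by
        rw [← integral_neg]; congr 1; ext x; ring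

noncomputable def hermiteReal (n : ℕ) : ℝ[X] := (hermite n).map (Int.castRingHom ℝ)

lemma hermiteReal_zero : hermiteReal 0 = 1 := by simp [hermiteReal]

lemma hermiteReal_succ (n : ℕ) :
    hermiteReal (n + 1) = X * hermiteReal n - derivative (hermiteReal n) := by
  simp [hermiteReal, hermite_succ, derivative_map]

lemma natDegree_hermiteReal (n : ℕ) : (hermiteReal n).natDegree = n := by
  rw [hermiteReal, (hermite_monic n).natDegree_map, natDegree_hermite]

lemma iterate_derivative_hermiteReal_self (n : ℕ) :
    derivative^[n] (hermiteReal n) = C (n ! : ℝ) := by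
  have hdeg : (derivative^[n] (hermiteReal n)).natDegree ≤ 0 := by
    simpa [natDegree_hermiteReal] using natDegree_iterate_derivative (hermiteReal n) n
  rw [eq_C_of_natDegree_le_zero hdeg, coeff_iterate_derivative]
  simp [hermiteReal, coeff_hermite_self, Nat.descFactorial_self]

lemma eval_zero_hermiteReal_two_mul (m : ℕ) :
    (hermiteReal (2 * m)).eval 0 = (-1) ^ m * ((2 * m - 1)‼ : ℝ) := by
  rw [← coeff_zero_eq_eval_zero, hermiteReal, coeff_map]
  simpa using congrArg (Int.cast : ℤ → ℝ) (coeff_hermite_explicit m 0)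

lemma integral_eval_mul_hermiteReal (n : ℕ) (P : ℝ[X]) :
    ∫ x, (P * hermiteReal n).eval x ∂(gaussianReal 0 1)
      = ∫ x, (derivative^[n] P).eval x ∂(gaussianReal 0 1) := by
  induction n generalizing P with
  | zero => simp [hermiteReal_zero]
  | succ n ih =>
    have hint (Q : ℝ[X]) := integrable_eval_gaussianReal Q 0 1
    have hstein := integral_eval_derivative_gaussianReal (P * hermiteReal n)
    simp only [derivative_mul, eval_add, integral_add (hint _) (hint _)] at hstein
    calc ∫ x, (P * hermiteReal (n + 1)).eval x ∂(gaussianReal 0 1)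
        = ∫ x, (X * (P * hermiteReal n)).eval x ∂(gaussianReal 0 1)
          - ∫ x, (P * derivative (hermiteReal n)).eval x ∂(gaussianReal 0 1) := by
          rw [← integral_sub (hint _) (hint _)]
          congr 1; ext x; simp [hermiteReal_succ]; ring
      _ = ∫ x, (derivative P * hermiteReal n).eval x ∂(gaussianReal 0 1) := by
          rw [← hstein]; ring
      _ = _ := by rw [ih, Function.iterate_succ_apply]

lemma integral_hermiteReal_mul_hermiteReal_of_lt {j k : ℕ} (h : j < k) :
    ∫ x, (hermiteReal j * hermiteReal k).eval x ∂(gaussianReal 0 1) = 0 := by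
  rw [integral_eval_mul_hermiteReal, iterate_derivative_eq_zero (by rwa [natDegree_hermiteReal])]
  simp

lemma integral_hermiteReal_mul_hermiteReal (j k : ℕ) :
    ∫ x, (hermiteReal j).eval x * (hermiteReal k).eval x ∂(gaussianReal 0 1)
      = if j = k then (k ! : ℝ) else 0 := by
  simp only [← eval_mul]
  rcases lt_trichotomy j k with h | rfl | h
  · rw [if_neg h.ne, integral_hermiteReal_mul_hermiteReal_of_lt h]
  · rw [if_pos rfl, integral_eval_mul_hermiteReal, iterate_derivative_hermiteReal_self]
    simp
  · rw [if_neg h.ne', mul_comm, integral_hermiteReal_mul_hermiteReal_of_lt h]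

lemma integral_sq_eval_sum_hermiteReal (s : Finset ℕ) (a : ℕ → ℝ) :
    ∫ x, ((∑ k ∈ s, C (a k) * hermiteReal k).eval x) ^ 2 ∂(gaussianReal 0 1)
      = ∑ k ∈ s, a k ^ 2 * k ! := by
  have hint (j k : ℕ) : Integrable (fun x => a j * a k *
      ((hermiteReal j).eval x * (hermiteReal k).eval x)) (gaussianReal 0 1) := by
    simpa [mul_assoc] using
      integrable_eval_gaussianReal (C (a j * a k) * hermiteReal j * hermiteReal k) 0 1
  calc ∫ x, ((∑ k ∈ s, C (a k) * hermiteReal k).eval x) ^ 2 ∂(gaussianReal 0 1)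
      = ∫ x, ∑ j ∈ s, ∑ k ∈ s, a j * a k *
          ((hermiteReal j).eval x * (hermiteReal k).eval x) ∂(gaussianReal 0 1) := by
        congr 1; ext x
        simp only [eval_finsetSum, eval_mul, eval_C, sq, Finset.sum_mul_sum]
        exact Finset.sum_congr rfl fun j _ => Finset.sum_congr rfl fun k _ => by ring
    _ = ∑ j ∈ s, ∑ k ∈ s, a j * a k * (if j = k then (k ! : ℝ) else 0) := by
        rw [integral_finsetSum _ fun j _ => integrable_finsetSum _ fun k _ => hint j k]
        refine Finset.sum_congr rfl fun j _ => ?_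
        rw [integral_finsetSum _ fun k _ => hint j k]
        simp only [integral_const_mul, integral_hermiteReal_mul_hermiteReal]
    _ = ∑ k ∈ s, a k ^ 2 * k ! := by
        simp [mul_ite, Finset.sum_ite_eq, sq]

/-- `hₖ(0)²` for the orthonormal Hermite polynomial `hₖ = Heₖ / √k!`. -/
noncomputable def hermiteWeight (k : ℕ) : ℝ := (hermiteReal k).eval 0 ^ 2 / (k !)

lemma hermiteWeight_nonneg (k : ℕ) : 0 ≤ hermiteWeight k := by
  unfold hermiteWeight; positivity

lemma hermiteWeight_two_mul_succ (m : ℕ) :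
    hermiteWeight (2 * (m + 1)) = hermiteWeight (2 * m) * ((2 * m + 1) / (2 * m + 2)) := by
  have hfact : (2 * (m + 1))! = (2 * m + 2) * ((2 * m + 1) * (2 * m)!) := by
    rw [show 2 * (m + 1) = 2 * m + 1 + 1 by ring, Nat.factorial_succ, Nat.factorial_succ]
  rw [hermiteWeight, hermiteWeight, eval_zero_hermiteReal_two_mul, eval_zero_hermiteReal_two_mul,
    show 2 * (m + 1) - 1 = 2 * m + 1 by omega, Nat.doubleFactorial_add_one, hfact]
  push_cast
  field_simp
  ring

lemma antitone_hermiteWeight_two_mul : Antitone fun m : ℕ => hermiteWeight (2 * m) := by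
  refine antitone_nat_of_succ_le fun m => ?_
  rw [hermiteWeight_two_mul_succ]
  exact mul_le_of_le_one_right (hermiteWeight_nonneg _)
    ((div_le_one (by positivity)).mpr (by linarith))

lemma one_le_mul_hermiteWeight_two_mul_sq (m : ℕ) :
    1 ≤ (4 * m + 1) * hermiteWeight (2 * m) ^ 2 := by
  induction m with
  | zero => simp [hermiteWeight, hermiteReal_zero]
  | succ m ih =>
    rw [hermiteWeight_two_mul_succ]
    generalize hermiteWeight (2 * m) = w at ih ⊢
    refine ih.trans ?_
    rw [mul_pow, div_pow, ← mul_assoc, mul_div_assoc', le_div_iff₀ (by positivity)]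
    push_cast
    -- `(4m+5)(2m+1)² - (4m+1)(2m+2)² = 1`
    nlinarith [sq_nonneg w]

noncomputable def hermiteKernelAtZero (d : ℕ) : ℝ[X] :=
  ∑ k ∈ Finset.range (d + 1), C ((hermiteReal k).eval 0 / k !) * hermiteReal k

lemma natDegree_hermiteKernelAtZero_le (d : ℕ) : (hermiteKernelAtZero d).natDegree ≤ d :=
  natDegree_sum_le_of_forall_le _ _ fun k hk => (natDegree_C_mul_le _ _).trans
    ((natDegree_hermiteReal k).trans_le (Finset.mem_range_succ_iff.mp hk))

lemma hermiteKernelAtZero_eval_zero (d : ℕ) :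
    (hermiteKernelAtZero d).eval 0 = ∑ k ∈ Finset.range (d + 1), hermiteWeight k := by
  simp only [hermiteKernelAtZero, hermiteWeight, eval_finsetSum, eval_mul, eval_C]
  exact Finset.sum_congr rfl fun k _ => by ring

lemma integral_sq_eval_hermiteKernelAtZero (d : ℕ) :
    ∫ x, (hermiteKernelAtZero d).eval x ^ 2 ∂(gaussianReal 0 1)
      = (hermiteKernelAtZero d).eval 0 := by
  rw [hermiteKernelAtZero, integral_sq_eval_sum_hermiteReal, ← hermiteKernelAtZero,
    hermiteKernelAtZero_eval_zero]
  refine Finset.sum_congr rfl fun k _ => ?_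
  rw [hermiteWeight]
  field_simp

lemma hermiteKernelAtZero_eval_zero_pos (d : ℕ) : 0 < (hermiteKernelAtZero d).eval 0 := by
  rw [hermiteKernelAtZero_eval_zero]
  exact Finset.sum_pos' (fun k _ => hermiteWeight_nonneg k)
    ⟨0, by simp, by simp [hermiteWeight, hermiteReal_zero]⟩

lemma succ_mul_hermiteWeight_le_hermiteKernelAtZero_eval_zero (d : ℕ) :
    (d / 2 + 1 : ℕ) * hermiteWeight (2 * (d / 2)) ≤ (hermiteKernelAtZero d).eval 0 := by
  rw [hermiteKernelAtZero_eval_zero]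
  calc (d / 2 + 1 : ℕ) * hermiteWeight (2 * (d / 2))
      = ∑ m ∈ Finset.range (d / 2 + 1), hermiteWeight (2 * (d / 2)) := by simp
    _ ≤ ∑ m ∈ Finset.range (d / 2 + 1), hermiteWeight (2 * m) :=
        Finset.sum_le_sum fun m hm =>
          antitone_hermiteWeight_two_mul (Finset.mem_range_succ_iff.mp hm)
    _ = ∑ k ∈ (Finset.range (d / 2 + 1)).image (2 * ·), hermiteWeight k :=
        (Finset.sum_image fun a _ b _ h => by simpa using h).symm
    _ ≤ ∑ k ∈ Finset.range (d + 1), hermiteWeight k :=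
        Finset.sum_le_sum_of_subset_of_nonneg
          (fun k hk => by simp only [Finset.mem_image, Finset.mem_range] at hk ⊢; omega)
          fun k _ _ => hermiteWeight_nonneg k

lemma succ_le_eight_mul_hermiteKernelAtZero_eval_zero_sq (d : ℕ) :
    (d + 1 : ℝ) ≤ 8 * (hermiteKernelAtZero d).eval 0 ^ 2 := by
  have hK := succ_mul_hermiteWeight_le_hermiteKernelAtZero_eval_zero d
  have hw := one_le_mul_hermiteWeight_two_mul_sq (d / 2)
  have hw0 := hermiteWeight_nonneg (2 * (d / 2))
  have hd : (d + 1 : ℝ) ≤ 2 * (d / 2 + 1 : ℕ) := by norm_cast; omega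
  generalize hermiteWeight (2 * (d / 2)) = w at hK hw hw0
  generalize (hermiteKernelAtZero d).eval 0 = K at hK ⊢
  push_cast at hK hd ⊢
  have hM : (0 : ℝ) ≤ (d / 2 : ℕ) := Nat.cast_nonneg _
  nlinarith [mul_le_mul hK hK (by positivity) (by nlinarith)]

theorem stmt_10 :
    ∃ C : ℝ, 0 < C ∧
      ∀ d : ℕ, 1 ≤ d →
        ∃ p : Polynomial ℝ, p.natDegree ≤ d ∧ p.eval 0 = 1 ∧
          ∫ x, (p.eval x) ^ 2 ∂(gaussianReal 0 1) ≤ C / Real.sqrt d := by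
  refine ⟨3, by norm_num, fun d hd => ?_⟩
  have hnorm := integral_sq_eval_hermiteKernelAtZero d
  have hbound := succ_le_eight_mul_hermiteKernelAtZero_eval_zero_sq d
  have hq0 := hermiteKernelAtZero_eval_zero_pos d
  set q := hermiteKernelAtZero d
  refine ⟨C (q.eval 0)⁻¹ * q, (natDegree_C_mul_le _ _).trans
    (natDegree_hermiteKernelAtZero_le d), by simp [hq0.ne'], ?_⟩
  have hsqrt : √(d : ℝ) ≤ 3 * q.eval 0 :=
    (Real.sqrt_le_left (by positivity)).mpr (by nlinarith)
  calc ∫ x, ((C (q.eval 0)⁻¹ * q).eval x) ^ 2 ∂(gaussianReal 0 1)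
      = (q.eval 0)⁻¹ := by
        simp only [eval_mul, eval_C, mul_pow, integral_const_mul, hnorm]
        field_simp
    _ ≤ 3 / √d := by
        rw [inv_eq_one_div, div_le_div_iff₀ hq0 (by positivity)]
        linarith
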